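/- (Bailey's transformation for balanced ₄F₃ series.) For a nonnegative integer N and parameters a,b,c,e,f: ₄F₃[a, b, c, −N; e, f, 1+a+b+c−e−f−N; 1] = [(e−a)_N (f−a)_N / ((e)_N (f)_N)] · ₄F₃[−N, a, 1+a+c−e−f−N, 1+a+b−e−f−N; 1+a+b+c−e−f−N, 1+a−e−N, 1+a−f−N; 1]. -/

import Mathlib

/-!
Everything is proved with denominators cleared, as polynomial identities over a commutative
ring. After multiplying by `(e)_N (f)_N (w)_N`, `w = 1 + a + b + c - e - f - N`, the product
`(1 + a + c - e - f - N)_k (1 + a + b - e - f - N)_k = (w - b)_k (w - c)_k` on the right is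
expanded as a Pfaff–Saalschütz sum; after exchanging the two summations the inner sum is again
of Pfaff–Saalschütz type and evaluates to `(e + j)_{N-j} (f + j)_{N-j}`, which is the left side.
Pfaff–Saalschütz in turn comes from expanding `(z + j)_{n-j}` by the Vandermonde convolution,
exchanging the sums and summing twice more by Vandermonde; the reflection
`(x)_n = (-1)^n (1 - x - n)_n` moves between the forms in which these sums appear.
-/

open Finset

noncomputable section

/-- rising factorial -/
def rf {R : Type*} [CommRing R] (a : R) (k : ℕ) : R := ∏ i ∈ Finset.range k, (a + i)

open Polynomial Nat

lemma neg_one_pow_mul_self {M : Type*} [Monoid M] [HasDistribNeg M] (n : ℕ) :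
    (-1 : M) ^ n * (-1) ^ n = 1 := by
  rw [← pow_add]
  exact Even.neg_one_pow ⟨n, rfl⟩

section CommRing

variable {R : Type*} [CommRing R]

lemma rf_succ_right (a : R) (n : ℕ) : rf a (n + 1) = rf a n * (a + n) := prod_range_succ _ _

lemma rf_succ_left (a : R) (n : ℕ) : rf a (n + 1) = a * rf (a + 1) n := by
  simp only [rf, prod_range_succ', Nat.cast_succ, Nat.cast_zero, add_zero, add_assoc,
    add_comm (1 : R), mul_comm]

lemma rf_add (a : R) (m n : ℕ) : rf a (m + n) = rf a m * rf (a + m) n := by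
  simp only [rf, prod_range_add, Nat.cast_add, add_assoc]

lemma rf_mul_rf_sub {k n : ℕ} (h : k ≤ n) (a : R) : rf a k * rf (a + k) (n - k) = rf a n := by
  rw [← rf_add, Nat.add_sub_cancel' h]

lemma rf_eq_neg_one_pow_mul_rf {a b : R} {n : ℕ} (h : a + b + n = 1) :
    rf a n = (-1) ^ n * rf b n := by
  induction n generalizing a with
  | zero => simp [rf]
  | succ n ih =>
    push_cast at h
    rw [rf_succ_left, ih (by linear_combination h), rf_succ_right, pow_succ]
    linear_combination ((-1) ^ n * rf b n) * h

lemma rf_eq_neg_one_pow_mul_rf_sub_mul_rf {p q : R} {k n : ℕ} (hpq : p + q + n = 1)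
    (h : k ≤ n) : rf p n = (-1) ^ k * rf p (n - k) * rf q k := by
  calc rf p n = rf p (n - k) * rf (p + (n - k : ℕ)) k := by rw [← rf_add, Nat.sub_add_cancel h]
    _ = _ := by
      rw [rf_eq_neg_one_pow_mul_rf (a := p + (n - k : ℕ)) (b := q)
        (by push_cast [h]; linear_combination hpq)]
      ring

lemma rf_eq_neg_one_pow_mul_smeval_descPochhammer (x : R) (n : ℕ) :
    rf x n = (-1) ^ n * (descPochhammer ℤ n).smeval (-x) := by
  induction n with
  | zero => simp [rf, smeval_one]
  | succ n ih =>
    rw [rf_succ_right, ih, descPochhammer_succ_right, smeval_mul, smeval_sub, smeval_X,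
      smeval_natCast]
    simp only [pow_one, pow_zero, nsmul_eq_mul, mul_one]
    ring

lemma rf_neg_natCast (N k : ℕ) : rf (-(N : R)) k = (-1) ^ k * k ! * N.choose k := by
  rw [rf_eq_neg_one_pow_mul_smeval_descPochhammer, neg_neg,
    descPochhammer_smeval_eq_descFactorial, descFactorial_eq_factorial_mul_choose]
  push_cast
  ring

theorem rf_add_eq_sum (x y : R) (n : ℕ) :
    rf (x + y) n = ∑ i ∈ range (n + 1), (n.choose i : R) * rf x i * rf y (n - i) := by
  rw [rf_eq_neg_one_pow_mul_smeval_descPochhammer, neg_add,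
    Ring.descPochhammer_smeval_add _ (Commute.all _ _), mul_sum,
    ← Nat.sum_antidiagonal_eq_sum_range_succ (fun i j => (n.choose i : R) * rf x i * rf y j)]
  refine sum_congr rfl fun ij hij => ?_
  rw [HasAntidiagonal.mem_antidiagonal] at hij
  simp only [rf_eq_neg_one_pow_mul_smeval_descPochhammer, ← hij, pow_add]
  ring

theorem sum_rf_chu_vandermonde (x z : R) (m : ℕ) :
    ∑ j ∈ range (m + 1), (-1) ^ j * (m.choose j : R) * rf x j * rf (z + j) (m - j)
      = rf (z - x) m := by
  rw [rf_eq_neg_one_pow_mul_rf (b := x + (1 - z - m)) (by ring), rf_add_eq_sum, mul_sum]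
  refine sum_congr rfl fun j hj => ?_
  have hjm : j ≤ m := mem_range_succ_iff.mp hj
  rw [rf_eq_neg_one_pow_mul_rf (b := 1 - z - m) (n := m - j) (by push_cast [hjm]; ring),
    ← pow_mul_pow_sub (-1 : R) hjm]
  ring

lemma choose_mul_choose_sub_comm (n i j : ℕ) :
    n.choose j * (n - j).choose i = n.choose i * (n - i).choose j := by
  have hj := Nat.choose_mul (n := n) (Nat.le_add_left j i)
  have hi := Nat.choose_mul (n := n) (Nat.le_add_right i j)
  rw [Nat.add_sub_cancel] at hj
  rw [Nat.add_sub_cancel_left] at hi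
  rw [← hj, ← hi, Nat.choose_symm_add]

lemma sum_rf_saalschutz_inner (x y z w : R) {n i : ℕ} (hi : i ≤ n)
    (hw : z + w + n = 1 + x + y) :
    ∑ j ∈ range (n - i + 1), (-1) ^ j * (n.choose j * (n - j).choose i : R) * rf x j * rf y j
        * rf (z - y) i * rf (y + j) (n - j - i) * rf (w + j) (n - j)
      = (-1) ^ n * rf (z - y) n * ((n.choose i : R) * rf (z - x - y) i * rf y (n - i)) := by
  obtain ⟨m, rfl⟩ : ∃ m, n = i + m := ⟨n - i, by omega⟩
  have hterm : ∀ j ∈ range (m + 1), (-1) ^ j * ((i + m).choose j * (i + m - j).choose i : R)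
        * rf x j * rf y j * rf (z - y) i * rf (y + j) (i + m - j - i) * rf (w + j) (i + m - j)
      = ((i + m).choose i * rf (z - y) i * rf y m * rf (w + m) i)
        * ((-1) ^ j * (m.choose j : R) * rf x j * rf (w + j) (m - j)) := by
    intro j hj
    have hjm : j ≤ m := mem_range_succ_iff.mp hj
    have hchoose :
        ((i + m).choose j * (i + m - j).choose i : R) = (i + m).choose i * m.choose j := by
      rw [← Nat.cast_mul, choose_mul_choose_sub_comm, Nat.add_sub_cancel_left, Nat.cast_mul]
    have hy : rf y j * rf (y + j) (i + m - j - i) = rf y m := by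
      rw [show i + m - j - i = m - j by omega, rf_mul_rf_sub hjm]
    have hw' : rf (w + j) (i + m - j) = rf (w + j) (m - j) * rf (w + m) i := by
      rw [show i + m - j = m - j + i by omega, rf_add, Nat.cast_sub hjm, add_add_sub_cancel]
    rw [hchoose, ← hy, hw']
    ring
  rw [Nat.add_sub_cancel_left, sum_congr rfl hterm, ← mul_sum, sum_rf_chu_vandermonde,
    rf_eq_neg_one_pow_mul_rf (a := w + m) (b := z - x - y) (n := i)
      (by push_cast at hw ⊢; linear_combination hw),
    rf_eq_neg_one_pow_mul_rf (a := w - x) (b := z - y + i) (n := m)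
      (by push_cast at hw ⊢; linear_combination hw),
    ← rf_mul_rf_sub (Nat.le_add_right i m) (z - y), Nat.add_sub_cancel_left, pow_add]
  ring

theorem sum_rf_saalschutz (x y z w : R) (n : ℕ) (hw : z + w + n = 1 + x + y) :
    ∑ j ∈ range (n + 1), (-1) ^ j * (n.choose j : R) * rf x j * rf y j * rf (z + j) (n - j)
        * rf (w + j) (n - j)
      = (-1) ^ n * rf (z - x) n * rf (z - y) n := by
  calc _ = ∑ j ∈ range (n + 1), ∑ i ∈ range (n - j + 1), (-1) ^ j
          * (n.choose j * (n - j).choose i : R) * rf x j * rf y j * rf (z - y) i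
          * rf (y + j) (n - j - i) * rf (w + j) (n - j) := by
        refine sum_congr rfl fun j _ => ?_
        rw [show z + j = (z - y) + (y + j) by ring, rf_add_eq_sum, mul_sum, sum_mul]
        refine sum_congr rfl fun i _ => ?_
        ring
    _ = ∑ i ∈ range (n + 1), ∑ j ∈ range (n - i + 1), (-1) ^ j
          * (n.choose j * (n - j).choose i : R) * rf x j * rf y j * rf (z - y) i
          * rf (y + j) (n - j - i) * rf (w + j) (n - j) :=
        sum_comm' fun j i => by simp only [mem_range]; omega
    _ = ∑ i ∈ range (n + 1), (-1) ^ n * rf (z - y) n * ((n.choose i : R) * rf (z - x - y) i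
          * rf y (n - i)) :=
        sum_congr rfl fun i hi =>
          sum_rf_saalschutz_inner x y z w (mem_range_succ_iff.mp hi) hw
    _ = _ := by rw [← mul_sum, ← rf_add_eq_sum, sub_add_cancel, mul_right_comm]

theorem sum_rf_saalschutz' (x y p q : R) (n : ℕ) (h : x + y + p + q + n = 1) :
    ∑ j ∈ range (n + 1), (-1) ^ j * (n.choose j : R) * rf x j * rf y j * rf p (n - j)
        * rf q (n - j)
      = rf (x + p) n * rf (x + q) n := by
  have hz : ∀ j ∈ range (n + 1), rf p (n - j) * rf q (n - j)
      = rf (1 - p - n + j) (n - j) * rf (1 - q - n + j) (n - j) := fun j hj => by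
    have hjn : j ≤ n := mem_range_succ_iff.mp hj
    rw [rf_eq_neg_one_pow_mul_rf (b := 1 - p - n + j) (by push_cast [hjn]; ring),
      rf_eq_neg_one_pow_mul_rf (a := q) (b := 1 - q - n + j) (by push_cast [hjn]; ring)]
    linear_combination rf (1 - p - n + j) (n - j) * rf (1 - q - n + j) (n - j)
      * neg_one_pow_mul_self (M := R) (n - j)
  calc _ = ∑ j ∈ range (n + 1), (-1) ^ j * (n.choose j : R) * rf x j * rf y j
        * rf (1 - p - n + j) (n - j) * rf (1 - q - n + j) (n - j) :=
        sum_congr rfl fun j hj => by rw [mul_assoc _ (rf p _), hz j hj, ← mul_assoc]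
    _ = (-1) ^ n * rf (1 - p - n - x) n * rf (1 - p - n - y) n :=
        sum_rf_saalschutz x y _ _ n (by linear_combination -h)
    _ = _ := by
      rw [rf_eq_neg_one_pow_mul_rf (a := 1 - p - n - x) (b := x + p) (by ring),
        show 1 - p - n - y = x + q by linear_combination -h]
      linear_combination rf (x + p) n * rf (x + q) n * neg_one_pow_mul_self (M := R) n

lemma sum_range_sum_range_succ_comm {M : Type*} [AddCommMonoid M] (f : ℕ → ℕ → M)
    (N : ℕ) :
    ∑ k ∈ range (N + 1), ∑ j ∈ range (k + 1), f k j
      = ∑ j ∈ range (N + 1), ∑ m ∈ range (N - j + 1), f (j + m) j := by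
  rw [sum_comm' (t' := range (N + 1)) (s' := fun j => Ico j (N + 1))
    fun k j => by simp only [mem_range, mem_Ico]; omega]
  refine sum_congr rfl fun j hj => ?_
  rw [sum_Ico_eq_sum_range, Nat.sub_add_comm (mem_range_succ_iff.mp hj)]

lemma sum_range_sum_range_choose_mul_choose (g : ℕ → ℕ → R) (N : ℕ) :
    ∑ k ∈ range (N + 1), ∑ j ∈ range (k + 1), (N.choose k * k.choose j : R) * g k j
      = ∑ j ∈ range (N + 1), (N.choose j : R)
          * ∑ m ∈ range (N - j + 1), ((N - j).choose m : R) * g (j + m) j := by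
  rw [sum_range_sum_range_succ_comm]
  refine sum_congr rfl fun j _ => ?_
  rw [mul_sum]
  refine sum_congr rfl fun m _ => ?_
  rw [← mul_assoc, ← Nat.cast_mul, ← Nat.cast_mul, Nat.choose_mul (Nat.le_add_right j m),
    Nat.add_sub_cancel_left]

theorem sum_rf_bailey (a b c e f : R) (N : ℕ) :
    ∑ k ∈ range (N + 1), (-1) ^ k * (N.choose k : R) * rf a k * rf (1 + a + c - e - f - N) k
        * rf (1 + a + b - e - f - N) k * rf (1 + a + b + c - e - f - N + k) (N - k)
        * rf (e - a) (N - k) * rf (f - a) (N - k)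
      = ∑ k ∈ range (N + 1), (-1) ^ k * (N.choose k : R) * rf a k * rf b k * rf c k
        * rf (e + k) (N - k) * rf (f + k) (N - k) * rf (1 + a + b + c - e - f - N + k) (N - k) := by
  set w := 1 + a + b + c - e - f - N with hw
  let g : ℕ → ℕ → R := fun k j => (-1) ^ j * rf a k * rf b j * rf c j * rf (w + j) (k - j)
    * rf (1 + b + c - w - k + j) (k - j) * rf (w + k) (N - k) * rf (e - a) (N - k)
    * rf (f - a) (N - k)
  have hg : ∀ j m, j + m ≤ N → ((N - j).choose m : R) * g (j + m) j
      = ((-1) ^ j * rf a j * rf b j * rf c j * rf (w + j) (N - j))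
        * ((-1) ^ m * ((N - j).choose m : R) * rf (a + j) m * rf (1 + a - e - f - N) m
          * rf (e - a) (N - j - m) * rf (f - a) (N - j - m)) := fun j m hjm => by
    have hwj : rf (w + j) m * rf (w + (j + m : ℕ)) (N - j - m) = rf (w + j) (N - j) := by
      rw [← rf_mul_rf_sub (show m ≤ N - j by omega), Nat.cast_add, add_assoc]
    have hrefl : rf (1 + b + c - w - (j + m : ℕ) + j) m = (-1) ^ m * rf (1 + a - e - f - N) m :=
      rf_eq_neg_one_pow_mul_rf (by rw [hw]; push_cast; ring)
    simp only [g, Nat.add_sub_cancel_left, rf_add a j m, hrefl, Nat.sub_add_eq, ← hwj]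
    ring
  calc _ = ∑ k ∈ range (N + 1), ∑ j ∈ range (k + 1),
          (N.choose k * k.choose j : R) * g k j := by
        refine sum_congr rfl fun k _ => ?_
        rw [show 1 + a + c - e - f - N = w - b by rw [hw]; ring,
          show 1 + a + b - e - f - N = w - c by rw [hw]; ring]
        calc _ = ((-1) ^ k * rf (w - b) k * rf (w - c) k) * ((N.choose k : R) * rf a k
              * rf (w + k) (N - k) * rf (e - a) (N - k) * rf (f - a) (N - k)) := by ring
          _ = _ := by
            rw [← sum_rf_saalschutz b c w (1 + b + c - w - k) k (by ring), sum_mul]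
            exact sum_congr rfl fun j _ => by ring
    _ = ∑ j ∈ range (N + 1), (N.choose j : R)
          * ∑ m ∈ range (N - j + 1), ((N - j).choose m : R) * g (j + m) j :=
        sum_range_sum_range_choose_mul_choose g N
    _ = _ := by
        refine sum_congr rfl fun j hj => ?_
        have hjN : j ≤ N := mem_range_succ_iff.mp hj
        rw [sum_congr rfl fun m hm => hg j m (by rw [mem_range] at hm; omega), ← mul_sum,
          sum_rf_saalschutz' (a + j) (1 + a - e - f - N) (e - a) (f - a) (N - j)
            (by push_cast [hjN]; ring), show a + j + (e - a) = e + j by ring,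
          show a + j + (f - a) = f + j by ring]
        ring

end CommRing

section Field

variable {K : Type*} [Field K] [CharZero K]

lemma bailey_lhs_term_mul {N k : ℕ} (hk : k ≤ N) (a b c e f w : K) (he : rf e k ≠ 0)
    (hf : rf f k ≠ 0) (hw : rf w k ≠ 0) :
    rf a k * rf b k * rf c k * rf (-(N : K)) k / (k ! * rf e k * rf f k * rf w k)
        * (rf e N * rf f N * rf w N)
      = (-1) ^ k * N.choose k * rf a k * rf b k * rf c k * rf (e + k) (N - k)
        * rf (f + k) (N - k) * rf (w + k) (N - k) := by
  rw [rf_neg_natCast, ← rf_mul_rf_sub hk e, ← rf_mul_rf_sub hk f, ← rf_mul_rf_sub hk w]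
  have := (Nat.cast_ne_zero (R := K)).mpr k.factorial_ne_zero
  field_simp

lemma bailey_rhs_term_mul {N k : ℕ} (hk : k ≤ N) (a u v e f w : K) (he : rf e N ≠ 0)
    (hf : rf f N ≠ 0) (hw : rf w k ≠ 0) (hea : rf (1 + a - e - N) k ≠ 0)
    (hfa : rf (1 + a - f - N) k ≠ 0) :
    rf (e - a) N * rf (f - a) N / (rf e N * rf f N)
        * (rf (-(N : K)) k * rf a k * rf u k * rf v k
          / (k ! * rf w k * rf (1 + a - e - N) k * rf (1 + a - f - N) k))
        * (rf e N * rf f N * rf w N)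
      = (-1) ^ k * N.choose k * rf a k * rf u k * rf v k * rf (w + k) (N - k)
        * rf (e - a) (N - k) * rf (f - a) (N - k) := by
  rw [rf_neg_natCast, ← rf_mul_rf_sub hk w,
    rf_eq_neg_one_pow_mul_rf_sub_mul_rf (q := 1 + a - e - N) (by ring) hk,
    rf_eq_neg_one_pow_mul_rf_sub_mul_rf (p := f - a) (q := 1 + a - f - N) (by ring) hk]
  have := (Nat.cast_ne_zero (R := K)).mpr k.factorial_ne_zero
  field_simp
  linear_combination (N.choose k : K) * rf a k * rf u k * rf v k * rf (w + k) (N - k)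
        * rf (e - a) (N - k) * rf (f - a) (N - k) * neg_one_pow_mul_self (M := K) k

end Field

/-- Bailey's transformation for terminating balanced `₄F₃` series. -/
theorem stmt13 (N : ℕ) (a b c e f : ℝ)
    (hden : ∀ k ≤ N, rf e k ≠ 0 ∧ rf f k ≠ 0
      ∧ rf (1 + a + b + c - e - f - N) k ≠ 0
      ∧ rf (1 + a - e - N) k ≠ 0 ∧ rf (1 + a - f - N) k ≠ 0) :
    ∑ k ∈ Finset.range (N + 1),
      rf a k * rf b k * rf c k * rf (-(N : ℝ)) k
        / ((Nat.factorial k : ℝ) * rf e k * rf f k * rf (1 + a + b + c - e - f - N) k)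
    = (rf (e - a) N * rf (f - a) N / (rf e N * rf f N))
      * ∑ k ∈ Finset.range (N + 1),
          rf (-(N : ℝ)) k * rf a k * rf (1 + a + c - e - f - N) k
              * rf (1 + a + b - e - f - N) k
            / ((Nat.factorial k : ℝ) * rf (1 + a + b + c - e - f - N) k
                * rf (1 + a - e - N) k * rf (1 + a - f - N) k) := by
  obtain ⟨he, hf, hw, -, -⟩ := hden N le_rfl
  refine mul_right_cancel₀ (mul_ne_zero (mul_ne_zero he hf) hw) ?_
  rw [sum_mul, mul_sum, sum_mul]
  convert (sum_rf_bailey a b c e f N).symm using 1 <;> refine sum_congr rfl fun k hk => ?_ <;>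
    obtain ⟨hek, hfk, hwk, hea, hfa⟩ := hden k (mem_range_succ_iff.mp hk)
  · exact bailey_lhs_term_mul (mem_range_succ_iff.mp hk) a b c e f _ hek hfk hwk
  · exact bailey_rhs_term_mul (mem_range_succ_iff.mp hk) a _ _ e f _ he hf hwk hea hfa
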